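/- Let (Ω, 𝒜, μ) be a measure space, p ∈ [1,∞), and T a positive C₀-semigroup on L_p(μ) with generator A. Let V : Ω → [0,∞] be locally measurable, and assume that (T_V)_{−V}(t) = T(t) for all t > 0. Then V is T-admissible, i.e., T_V is a C₀-semigroup on L_p(μ). -/
import Mathlib


open MeasureTheory Filter Topology ENNReal

noncomputable section

namespace Absorption

variable {E : Type*} [NormedAddCommGroup E] [NormedSpace ℝ E]

/-- A one-parameter semigroup of bounded operators (for nonnegative times). -/
def IsSemigroup (T : ℝ → E →L[ℝ] E) : Prop :=
  T 0 = ContinuousLinearMap.id ℝ E ∧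
    ∀ s t : ℝ, 0 ≤ s → 0 ≤ t → T (s + t) = (T s).comp (T t)

/-- A `C₀`-semigroup: a one-parameter semigroup which is strongly continuous on `[0, ∞)`. -/
def IsC0Semigroup (T : ℝ → E →L[ℝ] E) : Prop :=
  IsSemigroup T ∧ ∀ f : E, ContinuousOn (fun t => T t f) (Set.Ici (0 : ℝ))

/-- `(f, g)` belongs to the graph of the generator of the semigroup `T`. -/
def InGenerator (T : ℝ → E →L[ℝ] E) (f g : E) : Prop :=
  Tendsto (fun t : ℝ => t⁻¹ • (T t f - f)) (𝓝[>] (0 : ℝ)) (𝓝 g)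

variable {Ω : Type*} [MeasurableSpace Ω]

/-- A function into a measurable space is *locally measurable* (w.r.t. `μ`) if on every set of
finite measure it coincides a.e. with a measurable function. -/
def LocallyMeasurable {α : Type*} [MeasurableSpace α] (μ : Measure Ω) (V : Ω → α) : Prop :=
  ∀ B : Set Ω, MeasurableSet B → μ B < ∞ →
    ∃ g : Ω → α, Measurable g ∧ ∀ᵐ ω ∂(μ.restrict B), V ω = g ω

/-- A set is a local `μ`-null set if its intersection with every measurable set of finite
measure is null. -/
def IsLocalNullSet (μ : Measure Ω) (N : Set Ω) : Prop :=
  ∀ B : Set Ω, MeasurableSet B → μ B < ∞ → μ (N ∩ B) = 0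

/-- Positivity of a family of operators on `L_p` (for positive times). -/
def IsPositiveSG {p : ℝ≥0∞} {μ : Measure Ω} [Fact (1 ≤ p)]
    (T : ℝ → Lp ℝ p μ →L[ℝ] Lp ℝ p μ) : Prop :=
  ∀ t : ℝ, 0 ≤ t → ∀ f : Lp ℝ p μ, 0 ≤ f → 0 ≤ T t f

/-- A band projection on the Banach lattice `L_p(μ)`: an idempotent operator `P`
with `0 ≤ P f ≤ f` for all `f ≥ 0`. -/
def IsBandProjection {p : ℝ≥0∞} {μ : Measure Ω} [Fact (1 ≤ p)]
    (P : Lp ℝ p μ →L[ℝ] Lp ℝ p μ) : Prop :=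
  P.comp P = P ∧ ∀ f : Lp ℝ p μ, 0 ≤ f → 0 ≤ P f ∧ P f ≤ f

/-- `S = (e^{t(A−W)})_{t ≥ 0}`: `S` is the `C₀`-semigroup whose generator is `A - W`,
where `A` is the generator of `T` and the bounded function `W` acts by multiplication. -/
def IsPerturbedSG (μ : Measure Ω) (p : ℝ≥0∞) [Fact (1 ≤ p)]
    (T S : ℝ → Lp ℝ p μ →L[ℝ] Lp ℝ p μ) (W : Ω → ℝ) : Prop :=
  IsC0Semigroup S ∧
    ∀ f g : Lp ℝ p μ, InGenerator S f g ↔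
      ∃ g₀ : Lp ℝ p μ, InGenerator T f g₀ ∧
        ⇑g =ᵐ[μ] fun ω => g₀ ω - W ω * f ω

/-- Same as `IsPerturbedSG`, for semigroups acting on a subspace `F` of `L_p(μ)`. -/
def IsPerturbedSGSub (μ : Measure Ω) (p : ℝ≥0∞) [Fact (1 ≤ p)] (F : Submodule ℝ (Lp ℝ p μ))
    (T S : ℝ → F →L[ℝ] F) (W : Ω → ℝ) : Prop :=
  IsC0Semigroup S ∧
    ∀ f g : F, InGenerator S f g ↔
      ∃ g₀ : F, InGenerator T f g₀ ∧
        ⇑(g : Lp ℝ p μ) =ᵐ[μ] fun ω => (g₀ : Lp ℝ p μ) ω - W ω * (f : Lp ℝ p μ) ω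

/-- The truncation `V ∧ n` of `V : Ω → [0,∞]`, as a real-valued function. -/
def trunc (V : Ω → ℝ≥0∞) (n : ℕ) : Ω → ℝ := fun ω => (min (V ω) (n : ℝ≥0∞)).toReal

/-- The scalar multiple `ε V` of an absorption rate `V : Ω → [0,∞]`. -/
def smulRate (ε : ℝ) (V : Ω → ℝ≥0∞) : Ω → ℝ≥0∞ := fun ω => ENNReal.ofReal ε * V ω

/-- The absorption rate `V - V ∧ n` (with value `∞` wherever `V = ∞`). -/
def resid (V : Ω → ℝ≥0∞) (n : ℕ) : Ω → ℝ≥0∞ := fun ω => V ω - min (V ω) (n : ℝ≥0∞)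

/-- `TV` is the absorption semigroup `T_V` associated with the rate `V : Ω → [0,∞]`, i.e.
the strong limit `T_V(t) = s-lim_{n→∞} e^{t(A - V∧n)}` (for `t ≥ 0`). -/
def IsAbsorptionSG (μ : Measure Ω) (p : ℝ≥0∞) [Fact (1 ≤ p)]
    (T : ℝ → Lp ℝ p μ →L[ℝ] Lp ℝ p μ) (V : Ω → ℝ≥0∞)
    (TV : ℝ → Lp ℝ p μ →L[ℝ] Lp ℝ p μ) : Prop :=
  ∃ S : ℕ → ℝ → Lp ℝ p μ →L[ℝ] Lp ℝ p μ,
    (∀ n, IsPerturbedSG μ p T (S n) (trunc V n)) ∧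
    ∀ t : ℝ, 0 ≤ t → ∀ f, Tendsto (fun n => S n t f) atTop (𝓝 (TV t f))

/-- `V : Ω → [0,∞]` is `T`-admissible: `V` is locally measurable, the strong limits
`T_V(t) = s-lim_{n→∞} e^{t(A - V∧n)}` exist, and `T_V` is a `C₀`-semigroup. -/
def Admissible (μ : Measure Ω) (p : ℝ≥0∞) [Fact (1 ≤ p)]
    (T : ℝ → Lp ℝ p μ →L[ℝ] Lp ℝ p μ) (V : Ω → ℝ≥0∞) : Prop :=
  LocallyMeasurable μ V ∧
  ∃ TV, IsAbsorptionSG μ p T V TV ∧ IsC0Semigroup TV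

/-- The truncation `(V ∧ n) ∨ (−n)` of an extended-real-valued rate, as a real function. -/
def truncE (V : Ω → EReal) (n : ℕ) : Ω → ℝ :=
  fun ω => (max (min (V ω) (n : EReal)) (-(n : EReal))).toReal

/-- `TV` is the absorption semigroup `T_V` of an extended-real-valued rate `V`:
`T_V(t) = s-lim_{n→∞} e^{t(A - (V∧n)∨(−n))}` (for `t ≥ 0`). -/
def IsAbsorptionSGE (μ : Measure Ω) (p : ℝ≥0∞) [Fact (1 ≤ p)]
    (T : ℝ → Lp ℝ p μ →L[ℝ] Lp ℝ p μ) (V : Ω → EReal)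
    (TV : ℝ → Lp ℝ p μ →L[ℝ] Lp ℝ p μ) : Prop :=
  ∃ S : ℕ → ℝ → Lp ℝ p μ →L[ℝ] Lp ℝ p μ,
    (∀ n, IsPerturbedSG μ p T (S n) (truncE V n)) ∧
    ∀ t : ℝ, 0 ≤ t → ∀ f, Tendsto (fun n => S n t f) atTop (𝓝 (TV t f))

/-- `T`-admissibility for an extended-real-valued absorption rate `V`. -/
def AdmissibleE (μ : Measure Ω) (p : ℝ≥0∞) [Fact (1 ≤ p)]
    (T : ℝ → Lp ℝ p μ →L[ℝ] Lp ℝ p μ) (V : Ω → EReal) : Prop :=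
  LocallyMeasurable μ V ∧
  ∃ TV, IsAbsorptionSGE μ p T V TV ∧ IsC0Semigroup TV

end Absorption

open Absorption
/-- Let `V : Ω → [0,∞]` be locally measurable and suppose that the extension
`J (T_V)_{−V}(t) P` of `(T_V)_{−V}` satisfies `(T_V)_{−V}(t) = T(t)` for all `t > 0`. Then `V`
is `T`-admissible, i.e. `T_V` is a `C₀`-semigroup on `L_p(μ)`. -/
theorem statement12
    {Ω : Type*} [MeasurableSpace Ω] (μ : Measure Ω) (p : ℝ≥0∞) [Fact (1 ≤ p)] (hp : p ≠ ∞)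
    (T : ℝ → Lp ℝ p μ →L[ℝ] Lp ℝ p μ)
    (hT : IsC0Semigroup T) (hTpos : IsPositiveSG T)
    (V : Ω → ℝ≥0∞) (hVmeas : LocallyMeasurable μ V)
    -- the one-parameter semigroup `T_V = s-lim_{n→∞} e^{t(A − V∧n)}`
    (S : ℕ → ℝ → Lp ℝ p μ →L[ℝ] Lp ℝ p μ)
    (hS : ∀ n : ℕ, IsPerturbedSG μ p T (S n) (trunc V n))
    (TV : ℝ → Lp ℝ p μ →L[ℝ] Lp ℝ p μ)
    (hTV : ∀ t : ℝ, 0 ≤ t → ∀ f : Lp ℝ p μ,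
      Tendsto (fun n : ℕ => S n t f) atTop (𝓝 (TV t f)))
    -- the band projection `P = s-lim_{t→0+} T_V(t)`, with range the band `F` (`= L_p(μ₁)`)
    (P : Lp ℝ p μ →L[ℝ] Lp ℝ p μ)
    (hP : ∀ f : Lp ℝ p μ, Tendsto (fun t : ℝ => TV t f) (𝓝[>] (0 : ℝ)) (𝓝 (P f)))
    (hPband : IsBandProjection P)
    (F : Submodule ℝ (Lp ℝ p μ)) (hF : (F : Set (Lp ℝ p μ)) = Set.range P)
    -- the restriction `T_V|_F`, a `C₀`-semigroup
    (TVr : ℝ → F →L[ℝ] F)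
    (hTVr : ∀ t : ℝ, 0 ≤ t → ∀ f : F, ((TVr t f : F) : Lp ℝ p μ) = TV t (f : Lp ℝ p μ))
    (hTVrC0 : IsC0Semigroup TVr)
    -- `(T_V)_{−V}`, the `C₀`-semigroup obtained from `T_V|_F` by the perturbation `−V`
    (U : ℕ → ℝ → F →L[ℝ] F)
    (hU : ∀ n : ℕ, IsPerturbedSGSub μ p F TVr (U n) (fun ω => -(trunc V n ω)))
    (LV : ℝ → F →L[ℝ] F)
    (hLV : ∀ t : ℝ, 0 ≤ t → ∀ f : F, Tendsto (fun n : ℕ => U n t f) atTop (𝓝 (LV t f)))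
    (hLVC0 : IsC0Semigroup LV)
    -- the extension `J (T_V)_{−V}(t) P` of `(T_V)_{−V}(t)` to `L_p(μ)`, for `t > 0`
    (Lext : ℝ → Lp ℝ p μ →L[ℝ] Lp ℝ p μ)
    (hLext₁ : ∀ t : ℝ, 0 < t → ∀ f : F, Lext t (f : Lp ℝ p μ) = ((LV t f : F) : Lp ℝ p μ))
    (hLext₂ : ∀ t : ℝ, 0 < t → ∀ f : Lp ℝ p μ, Lext t f = Lext t (P f))
    -- the hypothesis `(T_V)_{−V}(t) = T(t)` for all `t > 0`
    (hEq : ∀ t : ℝ, 0 < t → Lext t = T t) :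
    -- `V` is `T`-admissible, i.e. `T_V` is a `C₀`-semigroup on `L_p(μ)`
    IsC0Semigroup TV ∧ Admissible μ p T V := by
  -- membership of `P f` in `F`
  have hPmem : ∀ f : Lp ℝ p μ, P f ∈ F := fun f => by
    have : P f ∈ (F : Set (Lp ℝ p μ)) := hF ▸ ⟨f, rfl⟩
    exact this
  -- Step 1: `P = id`
  have hPid : ∀ f : Lp ℝ p μ, P f = f := by
    intro f
    set pf : F := ⟨P f, hPmem f⟩ with hpf
    -- `T t f → f` as `t → 0⁺`
    have hval : T 0 f = f := by rw [hT.1.1]; rfl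
    have h1 : Tendsto (fun t : ℝ => T t f) (𝓝[>] (0 : ℝ)) (𝓝 f) := by
      have := (hT.2 f 0 Set.self_mem_Ici).tendsto
      rw [hval] at this
      exact this.mono_left (nhdsWithin_mono 0 Set.Ioi_subset_Ici_self)
    -- `(LV t pf : Lp) → P f` as `t → 0⁺`
    have hval2 : LV 0 pf = pf := by rw [hLVC0.1.1]; rfl
    have h2 : Tendsto (fun t : ℝ => ((LV t pf : F) : Lp ℝ p μ)) (𝓝[>] (0 : ℝ))
        (𝓝 (P f)) := by
      have h2' := (hLVC0.2 pf 0 Set.self_mem_Ici).tendsto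
      rw [hval2] at h2'
      have h2'' := (continuous_subtype_val.tendsto pf).comp h2'
      exact h2''.mono_left (nhdsWithin_mono 0 Set.Ioi_subset_Ici_self)
    -- the two functions agree on `(0, ∞)`
    have h3 : (fun t : ℝ => T t f) =ᶠ[𝓝[>] (0 : ℝ)]
        (fun t : ℝ => ((LV t pf : F) : Lp ℝ p μ)) := by
      filter_upwards [self_mem_nhdsWithin] with t ht
      have h3a : T t f = Lext t f := by rw [hEq t ht]
      have h3b : Lext t f = Lext t (P f) := hLext₂ t ht f
      have h3c : Lext t (P f) = ((LV t pf : F) : Lp ℝ p μ) := by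
        have := hLext₁ t ht pf
        simpa [hpf] using this
      rw [h3a, h3b, h3c]
    exact (tendsto_nhds_unique (h1.congr' h3) h2).symm
  -- hence every element of `Lp` lies in `F`
  have hmemF : ∀ g : Lp ℝ p μ, g ∈ F := fun g => hPid g ▸ hPmem g
  -- `TV` coincides with (the coercion of) `TVr`
  have hTVeq : ∀ t : ℝ, 0 ≤ t → ∀ g : Lp ℝ p μ,
      TV t g = ((TVr t ⟨g, hmemF g⟩ : F) : Lp ℝ p μ) := fun t ht g =>
    (hTVr t ht ⟨g, hmemF g⟩).symm
  have hC0 : IsC0Semigroup TV := by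
    refine ⟨⟨?_, ?_⟩, ?_⟩
    · -- `TV 0 = id`
      refine ContinuousLinearMap.ext fun g => ?_
      rw [hTVeq 0 le_rfl g, hTVrC0.1.1]
      rfl
    · -- semigroup law
      intro s t hs ht
      refine ContinuousLinearMap.ext fun g => ?_
      have key : TVr (s + t) ⟨g, hmemF g⟩ = TVr s (TVr t ⟨g, hmemF g⟩) := by
        rw [hTVrC0.1.2 s t hs ht]; rfl
      calc TV (s + t) g = ((TVr (s + t) ⟨g, hmemF g⟩ : F) : Lp ℝ p μ) :=
            hTVeq (s + t) (add_nonneg hs ht) g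
        _ = ((TVr s (TVr t ⟨g, hmemF g⟩) : F) : Lp ℝ p μ) := by rw [key]
        _ = TV s ((TVr t ⟨g, hmemF g⟩ : F) : Lp ℝ p μ) :=
            hTVr s hs (TVr t ⟨g, hmemF g⟩)
        _ = TV s (TV t g) := by rw [← hTVeq t ht g]
        _ = ((TV s).comp (TV t)) g := rfl
    · -- strong continuity on `[0, ∞)`
      intro g
      have hcont : ContinuousOn
          (fun t : ℝ => ((TVr t ⟨g, hmemF g⟩ : F) : Lp ℝ p μ)) (Set.Ici 0) :=
        continuous_subtype_val.comp_continuousOn (hTVrC0.2 ⟨g, hmemF g⟩)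
      exact hcont.congr fun t ht => hTVeq t ht g
  exact ⟨hC0, hVmeas, TV, ⟨S, hS, hTV⟩, hC0⟩
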